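/- arXiv:2103.06399 — 5 statements merged into one kernel-verified Lean document; each statement's English description precedes it below -/
import Mathlib

section
/- Let Φ be a continuous expansive action (with constant e > 0) of a finitely generated group G on a compact metric space M. Then the centralizer C(Φ) = { Ψ : Ψ is a continuous action of G on M commuting with Φ } is a discrete subset of the space of actions in the uniform (C⁰) metric: any two distinct commuting actions Ψ, Ψ' ∈ C(Φ) satisfy sup_{x,g} d(Ψ_g(x), Ψ'_g(x)) > e. -/
/-- The centralizer of an expansive action of a finitely
generated group on a compact metric space is discrete in the C⁰ metric: two
distinct commuting actions must be more than e apart somewhere. -/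
theorem stmt_4 {G M : Type*} [Group G] [Group.FG G]
    [MetricSpace M] [CompactSpace M]
    (Φ : G → M → M)
    (hΦ1 : ∀ x, Φ 1 x = x) (hΦm : ∀ g h x, Φ (g * h) x = Φ g (Φ h x))
    (hΦc : ∀ g, Continuous (Φ g))
    (e : ℝ) (he : 0 < e)
    (hexp : ∀ x y : M, x ≠ y → ∃ g : G, e < dist (Φ g x) (Φ g y)) :
    ∀ Ψ Ψ' : G → M → M,
      (∀ x, Ψ 1 x = x) → (∀ g h x, Ψ (g * h) x = Ψ g (Ψ h x)) →
      (∀ g, Continuous (Ψ g)) →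
      (∀ x, Ψ' 1 x = x) → (∀ g h x, Ψ' (g * h) x = Ψ' g (Ψ' h x)) →
      (∀ g, Continuous (Ψ' g)) →
      (∀ g h x, Φ g (Ψ h x) = Ψ h (Φ g x)) →
      (∀ g h x, Φ g (Ψ' h x) = Ψ' h (Φ g x)) →
      Ψ ≠ Ψ' → ∃ (g : G) (x : M), e < dist (Ψ g x) (Ψ' g x) := by
  intro Ψ Ψ' _ _ _ _ _ _ hc hc' hne
  have : ∃ g x, Ψ g x ≠ Ψ' g x := by
    by_contra h
    push_neg at h
    exact hne (funext fun g => funext fun x => h g x)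
  obtain ⟨g, x, hx⟩ := this
  obtain ⟨h, hh⟩ := hexp _ _ hx
  exact ⟨g, Φ h x, by rwa [hc h g x, hc' h g x] at hh⟩
end

section
/- Let G be a connected topological group acting continuously on a connected metric space M with more than one point. If the action Φ is expansive in the Bowen–Walters sense for group actions, then Φ has no fixed points: there is no p ∈ M with g·p = p for all g ∈ G. -/
/-!
Take the reparametrisation `h ≡ 1` in the definition of expansiveness: for a fixed point `p`
the orbit of `p` is constant, so every `y` with `dist p y < δ` stays `δ`-close to it and must
be of the form `Φ g₀ p = p`. Hence `{p}` is open, and being also closed it is all of the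
connected space `M`.
-/

open Metric

/-- Expansiveness in the sense of Bowen–Walters. -/
def IsExpansiveAction {G M : Type*} [One G] [PseudoMetricSpace G] [PseudoMetricSpace M]
    (Φ : G → M → M) : Prop :=
  ∀ ε > (0 : ℝ), ∃ δ > (0 : ℝ), ∀ x y : M, ∀ h : G → G,
    Continuous h → h 1 = 1 →
    (∀ g : G, dist (Φ g x) (Φ (h g) y) < δ) →
    ∃ g₀ : G, dist g₀ 1 < ε ∧ y = Φ g₀ x

theorem IsExpansiveAction.isOpen_singleton_of_fixed {G M : Type*} [One G] [PseudoMetricSpace G]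
    [PseudoMetricSpace M] {Φ : G → M → M} (hexp : IsExpansiveAction Φ) (hΦ1 : ∀ x, Φ 1 x = x)
    {p : M} (hp : ∀ g, Φ g p = p) : IsOpen ({p} : Set M) := by
  obtain ⟨δ, hδ, hE⟩ := hexp 1 one_pos
  refine isOpen_singleton_iff.2 ⟨δ, hδ, fun y hy => ?_⟩
  have hclose : ∀ g : G, dist (Φ g p) (Φ ((fun _ => 1) g) y) < δ := fun g => by
    rwa [hp, hΦ1, dist_comm]
  obtain ⟨g₀, -, rfl⟩ := hE p y (fun _ => 1) continuous_const rfl hclose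
  exact hp g₀

theorem IsOpen.subsingleton_of_singleton {X : Type*} [TopologicalSpace X] [PreconnectedSpace X]
    [T1Space X] {p : X} (h : IsOpen ({p} : Set X)) : Subsingleton X := by
  have huniv : ({p} : Set X) = Set.univ := IsClopen.eq_univ ⟨isClosed_singleton, h⟩ ⟨p, rfl⟩
  exact Set.subsingleton_univ_iff.1 (huniv ▸ Set.subsingleton_singleton)

theorem stmt_5_general {G M : Type*} [Group G] [MetricSpace G]
    [MetricSpace M] [ConnectedSpace M]
    (Φ : G → M → M)
    (hΦ1 : ∀ x, Φ 1 x = x)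
    (hM : ∃ a b : M, a ≠ b)
    (hexp : ∀ ε > (0 : ℝ), ∃ δ > (0 : ℝ), ∀ x y : M, ∀ h : G → G,
      Continuous h → h 1 = 1 →
      (∀ g : G, dist (Φ g x) (Φ (h g) y) < δ) →
      ∃ g₀ : G, dist g₀ 1 < ε ∧ y = Φ g₀ x) :
    ¬ ∃ p : M, ∀ g : G, Φ g p = p := by
  rintro ⟨p, hp⟩
  obtain ⟨a, b, hab⟩ := hM
  have : Subsingleton M :=
    (IsExpansiveAction.isOpen_singleton_of_fixed hexp hΦ1 hp).subsingleton_of_singleton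
  exact hab (Subsingleton.elim a b)

/-- A Bowen–Walters expansive action of a connected topological
group on a connected metric space with more than one point has no fixed
points. -/
theorem stmt_5 {G M : Type*} [Group G] [MetricSpace G] [IsTopologicalGroup G]
    [ConnectedSpace G] [MetricSpace M] [ConnectedSpace M]
    (hinv : ∀ a b c : G, dist (a * c) (b * c) = dist a b)
    (Φ : G → M → M)
    (hΦ1 : ∀ x, Φ 1 x = x) (hΦm : ∀ g h x, Φ (g * h) x = Φ g (Φ h x))
    (hΦc : Continuous fun p : G × M => Φ p.1 p.2)
    (hM : ∃ a b : M, a ≠ b)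
    (hexp : ∀ ε > (0 : ℝ), ∃ δ > (0 : ℝ), ∀ x y : M, ∀ h : G → G,
      Continuous h → h 1 = 1 →
      (∀ g : G, dist (Φ g x) (Φ (h g) y) < δ) →
      ∃ g₀ : G, dist g₀ 1 < ε ∧ y = Φ g₀ x) :
    ¬ ∃ p : M, ∀ g : G, Φ g p = p :=
  stmt_5_general Φ hΦ1 hM hexp
end

section
/- Let G be a finitely generated group with finite generating set K acting continuously and expansively on a compact metric space X of positive topological dimension. Then the geometric entropy h(Φ, K) = lim_{ε→0} limsup_{n→∞} (1/n) log S(n, ε, K) is positive, where S(n, ε, K) is the maximal cardinality of a set in which every pair of distinct points x, y satisfies d(g·x, g·y) > ε for some g ∈ K_n. In fact h(Φ, K) ≥ (log 2)/N, where N is the uniform expansiveness constant associated to δ = e/2. -/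
set_option linter.unusedSectionVars false
open Set Filter Metric

namespace Stmt9Aux

variable {G X : Type*} [Group G] [MetricSpace X]

/-- words of length at most `n` in the generators `K`. -/
def Wrd (K : Finset G) (n : ℕ) : Set G :=
  {g | ∃ l : List G, l.length ≤ n ∧ (∀ a ∈ l, a ∈ K) ∧ l.prod = g}

lemma one_mem_Wrd (K : Finset G) (n : ℕ) : (1 : G) ∈ Wrd K n :=
  ⟨[], by simp⟩

lemma Wrd_mono (K : Finset G) {m n : ℕ} (h : m ≤ n) : Wrd K m ⊆ Wrd K n :=
  fun _ ⟨l, hl, h2, h3⟩ => ⟨l, hl.trans h, h2, h3⟩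

lemma mul_mem_Wrd {K : Finset G} {m n : ℕ} {g h : G}
    (hg : g ∈ Wrd K m) (hh : h ∈ Wrd K n) : g * h ∈ Wrd K (m + n) := by
  obtain ⟨l1, hl1, hm1, hp1⟩ := hg
  obtain ⟨l2, hl2, hm2, hp2⟩ := hh
  exact ⟨l1 ++ l2, by simpa using Nat.add_le_add hl1 hl2,
    by intro a ha; rcases List.mem_append.1 ha with h | h; exacts [hm1 a h, hm2 a h],
    by rw [List.prod_append, hp1, hp2]⟩

lemma inv_mem_Wrd {K : Finset G} (hKsymm : ∀ g ∈ K, g⁻¹ ∈ K) {n : ℕ} {g : G}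
    (hg : g ∈ Wrd K n) : g⁻¹ ∈ Wrd K n := by
  obtain ⟨l, hl, hm, hp⟩ := hg
  refine ⟨(l.map (·⁻¹)).reverse, by simpa using hl, ?_, ?_⟩
  · intro a ha
    simp only [List.mem_reverse, List.mem_map] at ha
    obtain ⟨b, hb, rfl⟩ := ha
    exact hKsymm b (hm b hb)
  · rw [← hp, List.prod_inv_reverse]

lemma exists_mem_Wrd {K : Finset G} (hKsymm : ∀ g ∈ K, g⁻¹ ∈ K)
    (hKgen : Subgroup.closure (K : Set G) = ⊤) (g : G) : ∃ n, g ∈ Wrd K n := by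
  have hg : g ∈ Subgroup.closure (K : Set G) := by rw [hKgen]; trivial
  induction hg using Subgroup.closure_induction with
  | mem x hx => exact ⟨1, [x], by simpa using hx⟩
  | one => exact ⟨0, one_mem_Wrd K 0⟩
  | mul x y _ _ ihx ihy =>
      obtain ⟨m, hm⟩ := ihx; obtain ⟨n, hn⟩ := ihy
      exact ⟨m + n, mul_mem_Wrd hm hn⟩
  | inv x _ ihx =>
      obtain ⟨m, hm⟩ := ihx
      exact ⟨m, inv_mem_Wrd hKsymm hm⟩

lemma Wrd_finite (K : Finset G) (n : ℕ) : (Wrd K n).Finite := by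
  induction n with
  | zero =>
      refine Set.Finite.subset (Set.finite_singleton 1) ?_
      rintro g ⟨l, hl, -, hp⟩
      simp only [Nat.le_zero, List.length_eq_zero_iff] at hl
      simp [hl] at hp
      simp [← hp]
  | succ n ih =>
      refine Set.Finite.subset (ih.union (Set.Finite.biUnion K.finite_toSet
        (fun a _ => ih.image (a * ·)))) ?_
      rintro g ⟨l, hl, hm, hp⟩
      match l with
      | [] =>
          left; simp at hp; rw [← hp]; exact one_mem_Wrd K n
      | a :: t =>
          right
          refine Set.mem_biUnion (hm a (by simp)) ?_
          exact ⟨t.prod, ⟨t, by simpa using hl, fun b hb => hm b (by simp [hb]), rfl⟩,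
            by simpa using hp⟩



lemma Phi_inv_apply {Φ : G → X → X} (hΦ1 : ∀ x, Φ 1 x = x)
    (hΦm : ∀ g h x, Φ (g * h) x = Φ g (Φ h x)) (g : G) (x : X) :
    Φ g⁻¹ (Φ g x) = x := by
  rw [← hΦm, inv_mul_cancel, hΦ1]

lemma Phi_injective {Φ : G → X → X} (hΦ1 : ∀ x, Φ 1 x = x)
    (hΦm : ∀ g h x, Φ (g * h) x = Φ g (Φ h x)) (g : G) :
    Function.Injective (Φ g) := by
  intro x y hxy
  have := congrArg (Φ g⁻¹) hxy
  rwa [Phi_inv_apply hΦ1 hΦm, Phi_inv_apply hΦ1 hΦm] at this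

/-- uniform expansiveness -/
lemma unifExp [CompactSpace X] (K : Finset G) (hKsymm : ∀ g ∈ K, g⁻¹ ∈ K)
    (hKgen : Subgroup.closure (K : Set G) = ⊤)
    (Φ : G → X → X) (hΦc : ∀ g, Continuous (Φ g))
    (e : ℝ) (hexp : ∀ x y : X, x ≠ y → ∃ g : G, e < dist (Φ g x) (Φ g y))
    (δ : ℝ) (hδ : 0 < δ) :
    ∃ N₀ : ℕ, ∀ x y : X, δ ≤ dist x y → ∃ g ∈ Wrd K N₀, e < dist (Φ g x) (Φ g y) := by
  have hWex : ∀ g : G, ∃ n, g ∈ Wrd K n := fun g => exists_mem_Wrd hKsymm hKgen g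
  set P : Set (X × X) := {z | δ ≤ dist z.1 z.2} with hP
  have hPc : IsClosed P := isClosed_le continuous_const continuous_dist
  have hPcomp : IsCompact P := hPc.isCompact
  set U : ℕ → Set (X × X) :=
    fun n => ⋃ g ∈ Wrd K n, {z : X × X | e < dist (Φ g z.1) (Φ g z.2)} with hU
  have hUopen : ∀ n, IsOpen (U n) := by
    intro n
    refine isOpen_biUnion fun g _ => ?_
    exact isOpen_lt continuous_const
      (continuous_dist.comp (((hΦc g).comp continuous_fst).prodMk ((hΦc g).comp continuous_snd)))
  have hUmono : ∀ {m n : ℕ}, m ≤ n → U m ⊆ U n := by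
    intro m n hmn z hz
    simp only [hU, Set.mem_iUnion] at hz ⊢
    obtain ⟨g, hg, hz⟩ := hz
    exact ⟨g, Wrd_mono K hmn hg, hz⟩
  have hcover : P ⊆ ⋃ n, U n := by
    intro z hz
    have hne : z.1 ≠ z.2 := by
      intro hEq
      have : dist z.1 z.2 = 0 := by rw [hEq]; simp
      have := hz
      rw [hP] at this
      simp only [Set.mem_setOf_eq] at this
      linarith
    obtain ⟨g, hg⟩ := hexp z.1 z.2 hne
    obtain ⟨n, hn⟩ := hWex g
    exact Set.mem_iUnion.2 ⟨n, Set.mem_biUnion hn hg⟩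
  obtain ⟨t, ht⟩ := hPcomp.elim_finite_subcover U hUopen hcover
  refine ⟨t.sup id, fun x y hxy => ?_⟩
  have hzP : (x, y) ∈ P := hxy
  have h2 := ht hzP
  simp only [Set.mem_iUnion] at h2
  obtain ⟨n, hn, hz⟩ := h2
  have h3 : (x, y) ∈ U (t.sup id) := hUmono (Finset.le_sup (f := id) hn) (by
    simp only [hU, Set.mem_iUnion] at hz ⊢; exact hz)
  simp only [hU, Set.mem_iUnion] at h3
  obtain ⟨g, hg, hgz⟩ := h3
  exact ⟨g, hg, hgz⟩

end Stmt9Aux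

set_option maxHeartbeats 1000000
open Set Filter Metric
namespace Stmt9Bump
variable {X : Type*} [MetricSpace X]

/-- Boundary bumping: in a compact preconnected set `B`, the connected component of a
point `P` in a closed subset `F` meets the closure of `B \ F`, provided `B \ F ≠ ∅`. -/
lemma bump {B F : Set X} (hB : IsCompact B) (hBc : IsPreconnected B) (hF : IsClosed F)
    (hFB : F ⊆ B) {P : X} (hP : P ∈ F) (hne : (B \ F).Nonempty) :
    (connectedComponentIn F P ∩ closure (B \ F)).Nonempty := by
  by_contra hcon
  rw [Set.not_nonempty_iff_eq_empty] at hcon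
  have hFcomp : IsCompact F := hB.of_isClosed_subset hF hFB
  haveI : CompactSpace F := isCompact_iff_compactSpace.1 hFcomp
  set P' : F := ⟨P, hP⟩ with hP'
  have hcc : connectedComponentIn F P = Subtype.val '' connectedComponent P' :=
    connectedComponentIn_eq_image hP
  set S' : Set F := Subtype.val ⁻¹' closure (B \ F) with hS'
  have hS'closed : IsClosed S' := isClosed_closure.preimage continuous_subtype_val
  have hdisj : S' ∩ ⋂ s : {s : Set F // IsClopen s ∧ P' ∈ s}, (s : Set F) = ∅ := by
    rw [← connectedComponent_eq_iInter_isClopen P']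
    ext z
    simp only [Set.mem_inter_iff, Set.mem_empty_iff_false, iff_false, not_and]
    intro hz2 hz1
    have hmem : (z : X) ∈ connectedComponentIn F P ∩ closure (B \ F) :=
      ⟨hcc ▸ Set.mem_image_of_mem _ hz1, hz2⟩
    rw [hcon] at hmem; exact hmem
  have hSc : IsCompact S' := hS'closed.isCompact
  obtain ⟨u, hu⟩ := hSc.elim_finite_subfamily_closed
    (fun s : {s : Set F // IsClopen s ∧ P' ∈ s} => (s : Set F))
    (fun s => s.2.1.isClosed) hdisj
  set U : Set F := ⋂ s ∈ u, (s : Set F) with hUdef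
  have hUclopen : IsClopen U := isClopen_biInter_finset fun s _ => s.2.1
  have hPU : P' ∈ U := Set.mem_iInter₂.2 fun s _ => s.2.2
  have hUS' : S' ∩ U = ∅ := hu
  obtain ⟨O, hO, hOU⟩ := isOpen_induced_iff.1 hUclopen.isOpen
  set V : Set X := Subtype.val '' U with hVdef
  have hVF : V ⊆ F := by rintro z ⟨w, _, rfl⟩; exact w.2
  have hVcomp : IsCompact V := (hUclopen.isClosed.isCompact).image continuous_subtype_val
  have hVclosed : IsClosed V := hVcomp.isClosed
  set O' : Set X := O ∩ (closure (B \ F))ᶜ with hO'def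
  have hO'open : IsOpen O' := hO.inter isClosed_closure.isOpen_compl
  have hVO' : B ∩ O' = V := by
    apply Set.Subset.antisymm
    · rintro z ⟨hzB, hzO, hzc⟩
      have hzF : z ∈ F := by
        by_contra hzF
        exact hzc (subset_closure ⟨hzB, hzF⟩)
      have : (⟨z, hzF⟩ : F) ∈ U := by rw [← hOU]; exact hzO
      exact ⟨⟨z, hzF⟩, this, rfl⟩
    · rintro z ⟨w, hwU, rfl⟩
      refine ⟨hFB w.2, ?_, ?_⟩
      · have : w ∈ (Subtype.val ⁻¹' O : Set F) := by rw [hOU]; exact hwU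
        exact this
      · intro hzc
        have : w ∈ S' ∩ U := ⟨hzc, hwU⟩
        rw [hUS'] at this; exact this
  have hPV : P ∈ V := ⟨P', hPU, rfl⟩
  obtain ⟨z₀, hz₀B, hz₀F⟩ := hne
  have hcontr := hBc O' Vᶜ hO'open hVclosed.isOpen_compl
    (by
      intro z hz
      by_cases hzV : z ∈ V
      · left; have : z ∈ B ∩ O' := hVO' ▸ hzV; exact this.2
      · right; exact hzV)
    ⟨P, hFB hP, (hVO' ▸ hPV : P ∈ B ∩ O').2⟩
    ⟨z₀, hz₀B, fun hzV => hz₀F (hVF hzV)⟩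
  obtain ⟨z, hzB, hzO', hzVc⟩ := hcontr
  exact hzVc (hVO' ▸ (⟨hzB, hzO'⟩ : z ∈ B ∩ O'))
end Stmt9Bump

namespace Stmt9Split
open Stmt9Bump
variable {X : Type*} [MetricSpace X]

lemma split (e : ℝ) (he : 0 < e)
    {A : Set X} (hAcomp : IsCompact A) (hAconn : IsConnected A)
    {p q : X} (hp : p ∈ A) (hq : q ∈ A) (hpq : e < dist p q) :
    ∃ (A₁ A₂ : Set X) (q₁ q₂ : X),
      IsCompact A₁ ∧ IsConnected A₁ ∧ IsCompact A₂ ∧ IsConnected A₂ ∧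
      A₁ ⊆ A ∧ A₂ ⊆ A ∧ p ∈ A₁ ∧ q₁ ∈ A₁ ∧ q ∈ A₂ ∧ q₂ ∈ A₂ ∧
      e/5 ≤ dist p q₁ ∧ e/5 ≤ dist q q₂ ∧
      ∀ u ∈ A₁, ∀ v ∈ A₂, 3*e/5 ≤ dist u v := by
  have hAclosed : IsClosed A := hAcomp.isClosed
  -- the inner piece
  set F₁ : Set X := A ∩ (fun y => dist p y) ⁻¹' (Set.Iic (e/5)) with hF₁def
  have hF₁closed : IsClosed F₁ :=
    hAclosed.inter (isClosed_Iic.preimage (continuous_const.dist continuous_id))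
  have hF₁A : F₁ ⊆ A := Set.inter_subset_left
  have hpF₁ : p ∈ F₁ := ⟨hp, by simp; positivity⟩
  have hqF₁ : q ∉ F₁ := by
    intro hqF
    have : dist p q ≤ e/5 := hqF.2
    nlinarith
  have hne₁ : (A \ F₁).Nonempty := ⟨q, hq, hqF₁⟩
  obtain ⟨y₁, hy₁c, hy₁cl⟩ := bump hAcomp hAconn.isPreconnected hF₁closed hF₁A hpF₁ hne₁
  have hcomp₁ : IsCompact F₁ := hAcomp.of_isClosed_subset hF₁closed hF₁A
  haveI : CompactSpace F₁ := isCompact_iff_compactSpace.1 hcomp₁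
  have hA₁sub : connectedComponentIn F₁ p ⊆ F₁ := connectedComponentIn_subset _ _
  have hA₁conn : IsConnected (connectedComponentIn F₁ p) :=
    (isConnected_connectedComponentIn_iff).2 hpF₁
  have hA₁comp : IsCompact (connectedComponentIn F₁ p) := by
    rw [connectedComponentIn_eq_image hpF₁]
    exact (isClosed_connectedComponent.isCompact).image continuous_subtype_val
  have hy₁dist : dist p y₁ = e/5 := by
    have h1 : dist p y₁ ≤ e/5 := (hA₁sub hy₁c).2
    have h2 : e/5 ≤ dist p y₁ := by
      have hsub : A \ F₁ ⊆ {y | e/5 ≤ dist p y} := by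
        rintro y ⟨hyA, hyF⟩
        simp only [Set.mem_setOf_eq]
        by_contra hlt
        push_neg at hlt
        exact hyF ⟨hyA, by simp only [Set.mem_preimage, Set.mem_Iic]; linarith⟩
      have hclosed : IsClosed {y | e/5 ≤ dist p y} :=
        isClosed_le continuous_const (continuous_const.dist continuous_id)
      exact closure_minimal hsub hclosed hy₁cl
    linarith
  -- the outer piece
  set F₂ : Set X := A ∩ (fun y => dist p y) ⁻¹' (Set.Ici (4*e/5)) with hF₂def
  have hF₂closed : IsClosed F₂ :=
    hAclosed.inter (isClosed_Ici.preimage (continuous_const.dist continuous_id))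
  have hF₂A : F₂ ⊆ A := Set.inter_subset_left
  have hqF₂ : q ∈ F₂ := ⟨hq, by simp only [Set.mem_preimage, Set.mem_Ici]; nlinarith⟩
  have hpF₂ : p ∉ F₂ := by
    intro hpF
    have : 4*e/5 ≤ dist p p := hpF.2
    simp at this
    nlinarith
  have hne₂ : (A \ F₂).Nonempty := ⟨p, hp, hpF₂⟩
  obtain ⟨y₂, hy₂c, hy₂cl⟩ := bump hAcomp hAconn.isPreconnected hF₂closed hF₂A hqF₂ hne₂
  have hcomp₂ : IsCompact F₂ := hAcomp.of_isClosed_subset hF₂closed hF₂A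
  haveI : CompactSpace F₂ := isCompact_iff_compactSpace.1 hcomp₂
  have hA₂sub : connectedComponentIn F₂ q ⊆ F₂ := connectedComponentIn_subset _ _
  have hA₂conn : IsConnected (connectedComponentIn F₂ q) :=
    (isConnected_connectedComponentIn_iff).2 hqF₂
  have hA₂comp : IsCompact (connectedComponentIn F₂ q) := by
    rw [connectedComponentIn_eq_image hqF₂]
    exact (isClosed_connectedComponent.isCompact).image continuous_subtype_val
  have hy₂dist : dist p y₂ = 4*e/5 := by
    have h1 : 4*e/5 ≤ dist p y₂ := (hA₂sub hy₂c).2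
    have h2 : dist p y₂ ≤ 4*e/5 := by
      have hsub : A \ F₂ ⊆ {y | dist p y ≤ 4*e/5} := by
        rintro y ⟨hyA, hyF⟩
        simp only [Set.mem_setOf_eq]
        by_contra hlt
        push_neg at hlt
        exact hyF ⟨hyA, by simp only [Set.mem_preimage, Set.mem_Ici]; linarith⟩
      have hclosed : IsClosed {y | dist p y ≤ 4*e/5} :=
        isClosed_le (continuous_const.dist continuous_id) continuous_const
      exact closure_minimal hsub hclosed hy₂cl
    linarith
  refine ⟨connectedComponentIn F₁ p, connectedComponentIn F₂ q, y₁, y₂,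
    hA₁comp, hA₁conn, hA₂comp, hA₂conn, hA₁sub.trans hF₁A, hA₂sub.trans hF₂A,
    mem_connectedComponentIn hpF₁, hy₁c, mem_connectedComponentIn hqF₂, hy₂c,
    le_of_eq hy₁dist.symm, ?_, ?_⟩
  · have := dist_triangle p q y₂
    have h4 : dist q y₂ ≥ dist p q - dist p y₂ := by
      have := dist_triangle p y₂ q
      have hsymm : dist y₂ q = dist q y₂ := dist_comm _ _
      linarith
    rw [hy₂dist] at h4
    linarith
  · intro u hu v hv
    have h1 : dist p u ≤ e/5 := (hA₁sub hu).2
    have h2 : 4*e/5 ≤ dist p v := (hA₂sub hv).2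
    have h3 : dist p v ≤ dist p u + dist u v := dist_triangle p u v
    linarith
end Stmt9Split

namespace Stmt9Tree
open Stmt9Aux Stmt9Split Set Filter Metric

variable {G X : Type*} [Group G] [MetricSpace X]

lemma Phi_apply_inv {Φ : G → X → X} (hΦ1 : ∀ x, Φ 1 x = x)
    (hΦm : ∀ g h x, Φ (g * h) x = Φ g (Φ h x)) (g : G) (x : X) :
    Φ g (Φ g⁻¹ x) = x := by
  have := Phi_inv_apply hΦ1 hΦm g⁻¹ x
  rwa [inv_inv] at this

lemma tree (K : Finset G) (Φ : G → X → X)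
    (hΦ1 : ∀ x, Φ 1 x = x) (hΦm : ∀ g h x, Φ (g * h) x = Φ g (Φ h x))
    (hΦc : ∀ g, Continuous (Φ g))
    (e ε : ℝ) (he : 0 < e) (hε : ε ≤ e / 2)
    (N₀ : ℕ)
    (hN₀ : ∀ x y : X, e/5 ≤ dist x y → ∃ g ∈ Wrd K N₀, e < dist (Φ g x) (Φ g y))
    (M : ℕ)
    (base : ∃ (A : Set X) (h : G) (x p q : X), h ∈ Wrd K M ∧ IsCompact A ∧ IsConnected A ∧
       p ∈ A ∧ q ∈ A ∧ e/5 ≤ dist p q ∧ Φ h x ∈ A)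
    (k : ℕ) :
    ∃ (f : (Fin k → Bool) → X) (A : (Fin k → Bool) → Set X) (h : (Fin k → Bool) → G)
      (p q : (Fin k → Bool) → X),
      (∀ w, h w ∈ Wrd K (M + k * N₀)) ∧
      (∀ w, IsCompact (A w)) ∧ (∀ w, IsConnected (A w)) ∧
      (∀ w, p w ∈ A w) ∧ (∀ w, q w ∈ A w) ∧ (∀ w, e/5 ≤ dist (p w) (q w)) ∧
      (∀ w, Φ (h w) (f w) ∈ A w) ∧
      (∀ w w', w ≠ w' → ∀ x y : X, Φ (h w) x ∈ A w → Φ (h w') y ∈ A w' →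
        ∃ g ∈ Wrd K (M + k * N₀), ε < dist (Φ g x) (Φ g y)) := by
  induction k with
  | zero =>
      obtain ⟨A, h, x, p, q, hh, hAc, hAconn, hpA, hqA, hpq, hx⟩ := base
      refine ⟨fun _ => x, fun _ => A, fun _ => h, fun _ => p, fun _ => q,
        fun _ => by simpa using hh, fun _ => hAc, fun _ => hAconn,
        fun _ => hpA, fun _ => hqA, fun _ => hpq, fun _ => hx, ?_⟩
      intro w w' hww
      exact absurd (funext fun i => i.elim0) hww
  | succ k ih =>
      obtain ⟨f, A, h, p, q, H1, H2, H3, H4, H5, H6, H7, H8⟩ := ih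
      choose g hg hgd using fun w => hN₀ (p w) (q w) (H6 w)
      have hBc : ∀ w, IsCompact (Φ (g w) '' A w) := fun w => (H2 w).image (hΦc _)
      have hBconn : ∀ w, IsConnected (Φ (g w) '' A w) :=
        fun w => (H3 w).image _ ((hΦc _).continuousOn)
      have hPB : ∀ w, Φ (g w) (p w) ∈ Φ (g w) '' A w :=
        fun w => Set.mem_image_of_mem _ (H4 w)
      have hRB : ∀ w, Φ (g w) (q w) ∈ Φ (g w) '' A w :=
        fun w => Set.mem_image_of_mem _ (H5 w)
      choose A₁ A₂ q₁ q₂ hA₁c hA₁conn hA₂c hA₂conn hA₁sub hA₂sub hP₁ hq₁ hP₂ hq₂ hd₁ hd₂ hgap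
        using fun w => split e he (hBc w) (hBconn w) (hPB w) (hRB w) (hgd w)
      classical
      -- notation for the step
      have harith : N₀ + (M + k * N₀) = M + (k+1) * N₀ := by ring
      have hmono : M + k * N₀ ≤ M + (k+1) * N₀ := by
        have h1 : (k+1) * N₀ = k * N₀ + N₀ := by ring
        omega
      refine ⟨fun w => Φ (g (w ∘ Fin.castSucc) * h (w ∘ Fin.castSucc))⁻¹
          (cond (w (Fin.last k)) (Φ (g (w ∘ Fin.castSucc)) (q (w ∘ Fin.castSucc)))
            (Φ (g (w ∘ Fin.castSucc)) (p (w ∘ Fin.castSucc)))),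
        fun w => cond (w (Fin.last k)) (A₂ (w ∘ Fin.castSucc)) (A₁ (w ∘ Fin.castSucc)),
        fun w => g (w ∘ Fin.castSucc) * h (w ∘ Fin.castSucc),
        fun w => cond (w (Fin.last k)) (Φ (g (w ∘ Fin.castSucc)) (q (w ∘ Fin.castSucc)))
          (Φ (g (w ∘ Fin.castSucc)) (p (w ∘ Fin.castSucc))),
        fun w => cond (w (Fin.last k)) (q₂ (w ∘ Fin.castSucc)) (q₁ (w ∘ Fin.castSucc)),
        ?_, ?_, ?_, ?_, ?_, ?_, ?_, ?_⟩
      · intro w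
        exact harith ▸ mul_mem_Wrd (hg _) (H1 _)
      · intro w
        cases hbw : w (Fin.last k) <;> simp only [hbw, cond_false, cond_true]
        exacts [hA₁c _, hA₂c _]
      · intro w
        cases hbw : w (Fin.last k) <;> simp only [hbw, cond_false, cond_true]
        exacts [hA₁conn _, hA₂conn _]
      · intro w
        cases hbw : w (Fin.last k) <;> simp only [hbw, cond_false, cond_true]
        exacts [hP₁ _, hP₂ _]
      · intro w
        cases hbw : w (Fin.last k) <;> simp only [hbw, cond_false, cond_true]
        exacts [hq₁ _, hq₂ _]
      · intro w
        cases hbw : w (Fin.last k) <;> simp only [hbw, cond_false, cond_true]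
        exacts [hd₁ _, hd₂ _]
      · intro w
        rw [Phi_apply_inv hΦ1 hΦm]
        cases hbw : w (Fin.last k) <;> simp only [hbw, cond_false, cond_true]
        exacts [hP₁ _, hP₂ _]
      · -- separation
        have pull : ∀ (w : Fin (k+1) → Bool) (x : X),
            Φ (g (w ∘ Fin.castSucc) * h (w ∘ Fin.castSucc)) x ∈
              cond (w (Fin.last k)) (A₂ (w ∘ Fin.castSucc)) (A₁ (w ∘ Fin.castSucc)) →
            Φ (h (w ∘ Fin.castSucc)) x ∈ A (w ∘ Fin.castSucc) := by
          intro w x hx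
          have hxB : Φ (g (w ∘ Fin.castSucc) * h (w ∘ Fin.castSucc)) x ∈
              Φ (g (w ∘ Fin.castSucc)) '' A (w ∘ Fin.castSucc) := by
            cases hbw : w (Fin.last k) <;> rw [hbw] at hx
            exacts [hA₁sub _ hx, hA₂sub _ hx]
          rw [hΦm] at hxB
          obtain ⟨a, haA, ha⟩ := hxB
          have := Phi_injective hΦ1 hΦm (g (w ∘ Fin.castSucc)) ha
          rwa [← this]
        intro w w' hww x y hx hy
        dsimp only at hx hy
        by_cases hpar : w ∘ Fin.castSucc = w' ∘ Fin.castSucc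
        · -- siblings: last bits must differ
          have hbit : w (Fin.last k) ≠ w' (Fin.last k) := by
            intro hbb
            apply hww
            funext i
            refine Fin.lastCases ?_ ?_ i
            · exact hbb
            · intro j
              exact congrFun hpar j
          refine ⟨g (w ∘ Fin.castSucc) * h (w ∘ Fin.castSucc),
            harith ▸ mul_mem_Wrd (hg _) (H1 _), ?_⟩
          have hhw : g (w' ∘ Fin.castSucc) * h (w' ∘ Fin.castSucc)
              = g (w ∘ Fin.castSucc) * h (w ∘ Fin.castSucc) := by rw [hpar]
          rw [hhw, ← hpar] at hy
          cases hbw : w (Fin.last k) <;> cases hbw' : w' (Fin.last k) <;>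
            simp only [hbw, cond_false, cond_true] at hx <;>
            simp only [hbw', cond_false, cond_true] at hy
          · exact absurd (hbw.trans hbw'.symm) hbit
          · have hgapd := hgap (w ∘ Fin.castSucc) _ hx _ hy
            linarith
          · have hgapd := hgap (w ∘ Fin.castSucc) _ hy _ hx
            rw [dist_comm]
            linarith
          · exact absurd (hbw.trans hbw'.symm) hbit
        · obtain ⟨g₀, hg₀, hg₀d⟩ := H8 (w ∘ Fin.castSucc) (w' ∘ Fin.castSucc) hpar x y
            (pull w x hx) (pull w' y hy)
          exact ⟨g₀, Wrd_mono K hmono hg₀, hg₀d⟩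
end Stmt9Tree

namespace Stmt9Bdd
open Stmt9Aux Set Filter Metric

variable {G X : Type*} [Group G] [MetricSpace X]

lemma sep_bdd [CompactSpace X] (K : Finset G) (Φ : G → X → X) (hΦc : ∀ g, Continuous (Φ g))
    (n : ℕ) (ε : ℝ) (hε : 0 < ε) :
    BddAbove {k : ℕ | ∃ E : Finset X, E.card = k ∧
      ∀ x ∈ E, ∀ y ∈ E, x ≠ y → ∃ g : G,
        (∃ l : List G, l.length ≤ n ∧ (∀ a ∈ l, a ∈ K) ∧ l.prod = g) ∧
        ε < dist (Φ g x) (Φ g y)} := by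
  classical
  haveI : Fintype (Wrd K n) := (Wrd_finite K n).fintype
  set Ψ : X → (Wrd K n → X) := fun x g => Φ (g : G) x with hΨ
  obtain ⟨t, -, htfin, htcov⟩ :=
    finite_cover_balls_of_compact (isCompact_univ : IsCompact (Set.univ : Set (Wrd K n → X)))
      (half_pos hε)
  refine ⟨htfin.toFinset.card, fun m hm => ?_⟩
  obtain ⟨E, hEcard, hEsep⟩ := hm
  have hch : ∀ x : X, ∃ c, c ∈ t ∧ Ψ x ∈ ball c (ε/2) := by
    intro x
    have := htcov (Set.mem_univ (Ψ x))
    simpa using this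
  choose c hct hcb using hch
  rw [← hEcard]
  refine Finset.card_le_card_of_injOn (fun x => c x)
    (fun x _ => htfin.mem_toFinset.2 (hct x)) ?_
  intro x hx y hy hcxy
  by_contra hxy
  obtain ⟨g, hgW, hgd⟩ := hEsep x hx y hy hxy
  have hgW' : g ∈ Wrd K n := hgW
  have h1 : dist (Φ g x) (Φ g y) ≤ dist (Ψ x) (Ψ y) :=
    dist_le_pi_dist (Ψ x) (Ψ y) ⟨g, hgW'⟩
  have hcxy' : c x = c y := hcxy
  have h2 : dist (Ψ x) (Ψ y) ≤ dist (Ψ x) (c x) + dist (c y) (Ψ y) := by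
    rw [hcxy']
    exact dist_triangle (Ψ x) (c y) (Ψ y)
  have h3 : dist (Ψ x) (c x) < ε/2 := mem_ball.1 (hcb x)
  have h4 : dist (c y) (Ψ y) < ε/2 := by
    have := mem_ball.1 (hcb y)
    rw [dist_comm] at this
    exact this
  linarith
end Stmt9Bdd


open Stmt9Aux Stmt9Bump Stmt9Split Stmt9Tree Stmt9Bdd



/-- `maxSep K Φ n ε` is `S(n, ε, K)`: the maximal cardinality of an
(n, ε)-separated set for the action `Φ`, where a pair of distinct points is
separated if some element of `G` writable as a product of at most `n`
elements of `K` moves them more than `ε` apart. -/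
noncomputable def maxSep {G X : Type*} [Group G] [MetricSpace X]
    (K : Finset G) (Φ : G → X → X) (n : ℕ) (ε : ℝ) : ℕ :=
  sSup {k : ℕ | ∃ E : Finset X, E.card = k ∧
    ∀ x ∈ E, ∀ y ∈ E, x ≠ y → ∃ g : G,
      (∃ l : List G, l.length ≤ n ∧ (∀ a ∈ l, a ∈ K) ∧ l.prod = g) ∧
      ε < dist (Φ g x) (Φ g y)}

/-- An expansive action of a finitely generated group on a
compact metric space of positive topological dimension has positive geometric
entropy; in fact for every sufficiently small ε the exponential growth rate of
maximal separated sets is at least (log 2)/N, where N is the uniform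
expansiveness constant associated to δ = e/2. -/
theorem stmt_9 {G X : Type*} [Group G] [MetricSpace X] [CompactSpace X]
    (K : Finset G) (hK1 : (1 : G) ∈ K) (hKsymm : ∀ g ∈ K, g⁻¹ ∈ K)
    (hKgen : Subgroup.closure (K : Set G) = ⊤)
    (Φ : G → X → X)
    (hΦ1 : ∀ x, Φ 1 x = x) (hΦm : ∀ g h x, Φ (g * h) x = Φ g (Φ h x))
    (hΦc : ∀ g, Continuous (Φ g))
    (e : ℝ) (he : 0 < e)
    (hexp : ∀ x y : X, x ≠ y → ∃ g : G, e < dist (Φ g x) (Φ g y))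
    (hdim : ∃ C : Set X, IsConnected C ∧ ∃ a ∈ C, ∃ b ∈ C, a ≠ b) :
    ∃ N : ℕ, 0 < N ∧
      (∀ x y : X, e / 2 ≤ dist x y →
        ∃ g : G, (∃ l : List G, l.length ≤ N ∧ (∀ a ∈ l, a ∈ K) ∧ l.prod = g) ∧
          e < dist (Φ g x) (Φ g y)) ∧
      ∀ ε : ℝ, 0 < ε → ε ≤ e / 2 →
        ((Real.log 2 / N : ℝ) : EReal) ≤
          Filter.atTop.limsup
            (fun n : ℕ => ((Real.log (maxSep K Φ n ε) / n : ℝ) : EReal)) := by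
  classical
  obtain ⟨C, hC, a, haC, b, hbC, hab⟩ := hdim
  obtain ⟨g₀, hg₀d⟩ := hexp a b hab
  obtain ⟨M, hg₀M⟩ := exists_mem_Wrd hKsymm hKgen g₀
  obtain ⟨N₀, hN₀⟩ := unifExp K hKsymm hKgen Φ hΦc e hexp (e/5) (by linarith)
  refine ⟨N₀ + M + 1, by omega, ?_, ?_⟩
  · -- uniform expansiveness at threshold e/2
    intro x y hxy
    have h5 : e/5 ≤ dist x y := by linarith
    obtain ⟨g, hgW, hgd⟩ := hN₀ x y h5
    exact ⟨g, Wrd_mono K (by omega) hgW, hgd⟩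
  · intro ε hε hεe
    set N : ℕ := N₀ + M + 1 with hNdef
    -- the base datum for the tree
    have base : ∃ (A : Set X) (h : G) (x p q : X), h ∈ Wrd K M ∧ IsCompact A ∧
        IsConnected A ∧ p ∈ A ∧ q ∈ A ∧ e/5 ≤ dist p q ∧ Φ h x ∈ A := by
      refine ⟨Φ g₀ '' closure C, g₀, a, Φ g₀ a, Φ g₀ b, hg₀M, ?_, ?_, ?_, ?_, ?_, ?_⟩
      · exact (isClosed_closure.isCompact).image (hΦc g₀)
      · exact (hC.closure).image _ ((hΦc g₀).continuousOn)
      · exact Set.mem_image_of_mem _ (subset_closure haC)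
      · exact Set.mem_image_of_mem _ (subset_closure hbC)
      · linarith
      · exact Set.mem_image_of_mem _ (subset_closure haC)
    -- key: large separated sets
    have hkey : ∀ k m : ℕ, M + k * N₀ ≤ m → 2^k ≤ maxSep K Φ m ε := by
      intro k m hm
      obtain ⟨f, A, h, p, q, H1, H2, H3, H4, H5, H6, H7, H8⟩ :=
        tree K Φ hΦ1 hΦm hΦc e ε he hεe N₀ hN₀ M base k
      have hfinj : Function.Injective f := by
        intro w w' hf
        by_contra hww
        obtain ⟨g, -, hgd⟩ := H8 w w' hww (f w) (f w') (H7 w) (H7 w')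
        rw [hf] at hgd
        simp at hgd
        linarith
      have hcard : (Finset.image f Finset.univ).card = 2^k := by
        rw [Finset.card_image_of_injective _ hfinj, Finset.card_univ, Fintype.card_fun]
        simp
      refine le_csSup (sep_bdd K Φ hΦc m ε hε) ?_
      refine ⟨Finset.image f Finset.univ, hcard, ?_⟩
      intro x hx y hy hxy
      obtain ⟨w, -, rfl⟩ := Finset.mem_image.1 hx
      obtain ⟨w', -, rfl⟩ := Finset.mem_image.1 hy
      have hww : w ≠ w' := fun hEq => hxy (by rw [hEq])
      obtain ⟨g, hgW, hgd⟩ := H8 w w' hww (f w) (f w') (H7 w) (H7 w')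
      exact ⟨g, Wrd_mono K (le_trans (le_refl _) hm) hgW, hgd⟩
    -- pass to the limsup
    apply le_of_forall_lt
    intro c hc
    obtain ⟨r, hcr, hrt⟩ := EReal.exists_between_coe_real hc
    have hrt' : r < Real.log 2 / N := by exact_mod_cast hrt
    refine lt_of_lt_of_le hcr (le_limsup_of_frequently_le' ?_)
    -- the subsequence n = (k+1) * N
    have hN1 : (1:ℝ) ≤ (N:ℝ) := by exact_mod_cast Nat.one_le_iff_ne_zero.2 (by omega)
    have htend : Filter.Tendsto (fun k : ℕ => ((k:ℝ) * Real.log 2)/(((k:ℝ)+1) * N))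
        Filter.atTop (nhds (Real.log 2 / N)) := by
      have h0 := tendsto_natCast_div_add_atTop (𝕜 := ℝ) 1
      have h1 : Filter.Tendsto (fun k : ℕ => ((k:ℝ)/((k:ℝ)+1)) * (Real.log 2 / N))
          Filter.atTop (nhds (1 * (Real.log 2 / N))) := h0.mul_const _
      rw [one_mul] at h1
      convert h1 using 2 with k
      field_simp
    have hev : ∀ᶠ k : ℕ in Filter.atTop, r ≤ ((k:ℝ) * Real.log 2)/(((k:ℝ)+1) * N) :=
      htend.eventually_const_le hrt'
    obtain ⟨k₀, hk₀⟩ := Filter.eventually_atTop.1 hev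
    rw [Filter.frequently_atTop]
    intro m
    set k : ℕ := max k₀ m with hkdef
    refine ⟨(k+1) * N, ?_, ?_⟩
    · calc m ≤ k := le_max_right _ _
        _ ≤ (k+1) * N := by nlinarith [Nat.one_le_iff_ne_zero.2 (show N ≠ 0 by omega)]
    · -- r ≤ log (maxSep ((k+1)*N)) / ((k+1)*N)
      have hsep : 2^k ≤ maxSep K Φ ((k+1) * N) ε := by
        apply hkey
        have hexpand : (k+1) * N = k * N₀ + (k * M + k + N₀ + M + 1) := by
          rw [hNdef]; ring
        omega
      have hpos : (0:ℝ) < ((k+1) * N : ℕ) := by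
        have : 0 < (k+1) * N := by positivity
        exact_mod_cast this
      have hlog : (k:ℝ) * Real.log 2 ≤ Real.log (maxSep K Φ ((k+1) * N) ε) := by
        have h2k : ((2:ℝ))^k ≤ (maxSep K Φ ((k+1) * N) ε : ℝ) := by
          exact_mod_cast hsep
        calc (k:ℝ) * Real.log 2 = Real.log ((2:ℝ)^k) := by rw [Real.log_pow]
          _ ≤ _ := Real.log_le_log (by positivity) h2k
      have hdivle : ((k:ℝ) * Real.log 2)/(((k:ℝ)+1) * N)
          ≤ Real.log (maxSep K Φ ((k+1) * N) ε) / (((k+1) * N : ℕ) : ℝ) := by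
        have hcast : (((k+1) * N : ℕ) : ℝ) = ((k:ℝ)+1) * N := by push_cast; ring
        rw [hcast]
        have hNpos : (0:ℝ) < ((k:ℝ)+1) * N := by
          have hk0 : (0:ℝ) ≤ (k:ℝ) := Nat.cast_nonneg k
          nlinarith
        exact (div_le_div_iff_of_pos_right hNpos).2 hlog
      have : r ≤ Real.log (maxSep K Φ ((k+1) * N) ε) / (((k+1) * N : ℕ) : ℝ) :=
        le_trans (hk₀ k (le_max_left _ _)) hdivle
      exact_mod_cast EReal.coe_le_coe_iff.2 this
end

section
/- Let 𝒢 be a pseudogroup of local homeomorphisms of a compact metric space T, finitely generated by a finite set K (closed under inverses, containing the identity), and suppose 𝒢 is expansive with constant e: for all distinct x, y ∈ T lying in a common domain, there exists g ∈ 𝒢 with x, y ∈ dom(g) and d(g(x), g(y)) > e. Then 𝒢 is uniformly expansive: for every ε > 0 there exists N ∈ ℕ such that whenever d(x,y) ≥ ε (x, y in a common transversal component), there exists g ∈ 𝒢 with word length #g ≤ N (composition of at most N elements of K), x, y ∈ dom(g), and d(g(x), g(y)) > e. -/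
/-!
Call a pair `(x, y)` `n`-separated if some word of length at most `n` is defined at both points
and moves them more than `e` apart. Being `n`-separated is an open condition on the pair and is
monotone in `n`, and expansiveness says that every pair off the diagonal is `n`-separated for some
`n`. The pairs at distance at least `ε` form a compact set, so this increasing open cover of it
has a single member containing it.
-/

/-- `IsWord K n g` means that the local homeomorphism `g` is a composition of
at most `n` elements of the generating set `K` (pseudogroup word length ≤ n). -/
def IsWord {T : Type*} [TopologicalSpace T]
    (K : Set (OpenPartialHomeomorph T T)) : ℕ → OpenPartialHomeomorph T T → Prop
  | 0, g => g = OpenPartialHomeomorph.refl T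
  | n + 1, g => IsWord K n g ∨ ∃ h ∈ K, ∃ g', IsWord K n g' ∧ g = g'.trans h

section

variable {T : Type*}

theorem IsWord.mono [TopologicalSpace T] {K : Set (OpenPartialHomeomorph T T)} {n m : ℕ}
    {g : OpenPartialHomeomorph T T} (h : IsWord K n g) (hnm : n ≤ m) : IsWord K m g := by
  induction m, hnm using Nat.le_induction with
  | base => exact h
  | succ m _ ih => exact Or.inl ih

theorem OpenPartialHomeomorph.isOpen_setOf_lt_dist [MetricSpace T]
    (g : OpenPartialHomeomorph T T) (e : ℝ) :
    IsOpen {p : T × T | p.1 ∈ g.source ∧ p.2 ∈ g.source ∧ e < dist (g p.1) (g p.2)} := by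
  have hdist : ContinuousOn (fun p : T × T => dist (g p.1) (g p.2)) (g.source ×ˢ g.source) :=
    continuous_dist.comp_continuousOn <|
      (g.continuousOn.comp continuousOn_fst fun _ hp => hp.1).prodMk
        (g.continuousOn.comp continuousOn_snd fun _ hp => hp.2)
  convert hdist.isOpen_inter_preimage (g.open_source.prod g.open_source) (isOpen_Ioi (a := e))
    using 1
  ext p
  simp only [Set.mem_ofPred_eq, Set.mem_inter_iff, Set.mem_prod, Set.mem_preimage, Set.mem_Ioi,
    and_assoc]

def wordSeparatedPairs [MetricSpace T] (K : Set (OpenPartialHomeomorph T T)) (e : ℝ) (n : ℕ) :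
    Set (T × T) :=
  {p | ∃ g, IsWord K n g ∧ p.1 ∈ g.source ∧ p.2 ∈ g.source ∧ e < dist (g p.1) (g p.2)}

variable [MetricSpace T] (K : Set (OpenPartialHomeomorph T T)) (e : ℝ)

theorem isOpen_wordSeparatedPairs (n : ℕ) : IsOpen (wordSeparatedPairs K e n) := by
  have hunion : wordSeparatedPairs K e n = ⋃ (g) (_ : IsWord K n g),
      {p : T × T | p.1 ∈ g.source ∧ p.2 ∈ g.source ∧ e < dist (g p.1) (g p.2)} := by
    ext p
    simp only [wordSeparatedPairs, Set.mem_ofPred_eq, Set.mem_iUnion, exists_prop]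
  rw [hunion]
  exact isOpen_biUnion fun g _ => g.isOpen_setOf_lt_dist e

theorem monotone_wordSeparatedPairs : Monotone (wordSeparatedPairs K e) :=
  fun _ _ hnm _ ⟨g, hg, hsep⟩ => ⟨g, hg.mono hnm, hsep⟩

end

theorem stmt_10_general {T : Type*} [MetricSpace T] [CompactSpace T]
    (K : Set (OpenPartialHomeomorph T T))
    (e : ℝ)
    (hexp : ∀ x y : T, x ≠ y → ∃ (n : ℕ) (g : OpenPartialHomeomorph T T),
      IsWord K n g ∧ x ∈ g.source ∧ y ∈ g.source ∧ e < dist (g x) (g y)) :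
    ∀ ε > (0 : ℝ), ∃ N : ℕ, ∀ x y : T, ε ≤ dist x y →
      ∃ g : OpenPartialHomeomorph T T, IsWord K N g ∧
        x ∈ g.source ∧ y ∈ g.source ∧ e < dist (g x) (g y) := by
  intro ε hε
  have hcompact : IsCompact {p : T × T | ε ≤ dist p.1 p.2} :=
    (isClosed_le continuous_const continuous_dist).isCompact
  have hcover : {p : T × T | ε ≤ dist p.1 p.2} ⊆ ⋃ n, wordSeparatedPairs K e n := by
    rintro ⟨x, y⟩ hxy
    have hne : x ≠ y := dist_pos.1 (hε.trans_le hxy)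
    obtain ⟨n, hsep⟩ := hexp x y hne
    exact Set.mem_iUnion.2 ⟨n, hsep⟩
  obtain ⟨N, hN⟩ := hcompact.elim_directed_cover _ (isOpen_wordSeparatedPairs K e) hcover
    (monotone_wordSeparatedPairs K e).directed_le
  exact ⟨N, fun x y hxy => hN (show (x, y) ∈ {p : T × T | ε ≤ dist p.1 p.2} from hxy)⟩

/-- A finitely generated expansive pseudogroup of local
homeomorphisms of a compact metric space is uniformly expansive. -/
theorem stmt_10 {T : Type*} [MetricSpace T] [CompactSpace T]
    (K : Set (OpenPartialHomeomorph T T)) (hKfin : K.Finite)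
    (hKid : OpenPartialHomeomorph.refl T ∈ K) (hKinv : ∀ g ∈ K, g.symm ∈ K)
    (e : ℝ) (he : 0 < e)
    (hexp : ∀ x y : T, x ≠ y → ∃ (n : ℕ) (g : OpenPartialHomeomorph T T),
      IsWord K n g ∧ x ∈ g.source ∧ y ∈ g.source ∧ e < dist (g x) (g y)) :
    ∀ ε > (0 : ℝ), ∃ N : ℕ, ∀ x y : T, ε ≤ dist x y →
      ∃ g : OpenPartialHomeomorph T T, IsWord K N g ∧
        x ∈ g.source ∧ y ∈ g.source ∧ e < dist (g x) (g y) :=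
  stmt_10_general K e hexp
end

section
/- Let G be a group acting on a metric space M (action Φ) and let p ∈ M be a fixed point of Φ. Then for every δ > 0, every y ∈ M with d(p, y) < δ, and the constant map h : G → G, h(g) = e, one has d(Φ(g, p), Φ(h(g), y)) = d(p, y) < δ for all g ∈ G. Consequently, if Φ is expansive in the Bowen–Walters sense with parameters (ε, δ) and p is fixed, then the open ball B_δ(p) is contained in {Φ(g₀, p) : |g₀| < ε} = {p}, so B_δ(p) = {p}; hence if M is connected with more than one point, Φ has no fixed point. -/
/-! At a fixed point `p` the orbit of `p` is `{p}`, so with the constant reparametrization `h ≡ 1`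
every `y` with `dist p y < δ` stays `δ`-close to the orbit of `p` for all times. Expansiveness then
puts `y` on the orbit of `p`, i.e. `y = p`: the point `p` is isolated, which is impossible in a
connected space with more than one point. -/

open Metric Set

theorem subsingleton_of_isOpen_singleton {X : Type*} [TopologicalSpace X] [T1Space X]
    [PreconnectedSpace X] {p : X} (hp : IsOpen ({p} : Set X)) : Subsingleton X := by
  have huniv : ({p} : Set X) = univ :=
    IsClopen.eq_univ ⟨isClosed_singleton, hp⟩ (singleton_nonempty p)
  exact subsingleton_univ_iff.mp (huniv ▸ subsingleton_singleton)

theorem dist_apply_fixedPoint_apply_one {G M : Type*} [One G] [PseudoMetricSpace M]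
    {Φ : G → M → M} (hΦ1 : ∀ x, Φ 1 x = x) {p : M} (hp : ∀ g, Φ g p = p) (y : M) (g : G) :
    dist (Φ g p) (Φ 1 y) = dist p y := by
  rw [hp, hΦ1]

section Action

variable {G M : Type*} [One G] [PseudoMetricSpace G] [MetricSpace M]

def BowenWaltersExpansive (Φ : G → M → M) : Prop :=
  ∀ ε > (0 : ℝ), ∃ δ > (0 : ℝ), ∀ x y : M, ∀ h : G → G,
    Continuous h → h 1 = 1 →
    (∀ g : G, dist (Φ g x) (Φ (h g) y) < δ) →
    ∃ g₀ : G, dist g₀ 1 < ε ∧ y = Φ g₀ x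

theorem BowenWaltersExpansive.exists_ball_fixedPoint_eq_singleton {Φ : G → M → M}
    (hΦ : BowenWaltersExpansive Φ) (hΦ1 : ∀ x, Φ 1 x = x) {ε : ℝ} (hε : 0 < ε) :
    ∃ δ > (0 : ℝ), ∀ p : M, (∀ g : G, Φ g p = p) → ball p δ = {p} := by
  obtain ⟨δ, hδ, hshadow⟩ := hΦ ε hε
  refine ⟨δ, hδ, fun p hp => subset_antisymm (fun y hy => ?_) (singleton_subset_iff.mpr
    (mem_ball_self hδ))⟩
  obtain ⟨g₀, -, rfl⟩ := hshadow p y (fun _ => 1) continuous_const rfl fun g => by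
    rw [dist_apply_fixedPoint_apply_one hΦ1 hp]
    exact mem_ball'.mp hy
  exact hp g₀

theorem BowenWaltersExpansive.subsingleton_of_fixedPoint [PreconnectedSpace M] {Φ : G → M → M}
    (hΦ : BowenWaltersExpansive Φ) (hΦ1 : ∀ x, Φ 1 x = x) {p : M} (hp : ∀ g : G, Φ g p = p) :
    Subsingleton M := by
  obtain ⟨δ, -, hball⟩ := hΦ.exists_ball_fixedPoint_eq_singleton hΦ1 one_pos
  exact subsingleton_of_isOpen_singleton (hball p hp ▸ isOpen_ball)

end Action

theorem stmt_18_general {G M : Type*} [Group G] [MetricSpace G]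
    [MetricSpace M]
    (Φ : G → M → M)
    (hΦ1 : ∀ x, Φ 1 x = x)
    (hexp : ∀ ε > (0 : ℝ), ∃ δ > (0 : ℝ), ∀ x y : M, ∀ h : G → G,
      Continuous h → h 1 = 1 →
      (∀ g : G, dist (Φ g x) (Φ (h g) y) < δ) →
      ∃ g₀ : G, dist g₀ 1 < ε ∧ y = Φ g₀ x) :
    (∀ (p : M), (∀ g : G, Φ g p = p) →
      ∀ (δ : ℝ) (y : M), dist p y < δ →
        ∀ g : G, dist (Φ g p) (Φ ((fun _ : G => (1 : G)) g) y) = dist p y ∧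
          dist (Φ g p) (Φ ((fun _ : G => (1 : G)) g) y) < δ) ∧
    (∀ ε > (0 : ℝ), ∃ δ > (0 : ℝ), ∀ p : M, (∀ g : G, Φ g p = p) →
      Metric.ball p δ = {p}) ∧
    (ConnectedSpace M → (∃ a b : M, a ≠ b) → ¬ ∃ p : M, ∀ g : G, Φ g p = p) := by
  have hΦ : BowenWaltersExpansive Φ := hexp
  refine ⟨fun p hp δ y hy g => ?_, fun ε hε => hΦ.exists_ball_fixedPoint_eq_singleton hΦ1 hε, ?_⟩
  · have hdist := dist_apply_fixedPoint_apply_one hΦ1 hp y g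
    exact ⟨hdist, hdist ▸ hy⟩
  · rintro hM ⟨a, b, hab⟩ ⟨p, hp⟩
    have := hΦ.subsingleton_of_fixedPoint hΦ1 hp
    exact hab (Subsingleton.elim a b)

/-- At a fixed point `p` of an action, the constant-identity
reparametrization keeps nearby points uniformly close; consequently, for a
Bowen–Walters expansive action the δ-ball around any fixed point is `{p}`,
and hence a connected space with more than one point admits no fixed point. -/
theorem stmt_18 {G M : Type*} [Group G] [MetricSpace G] [IsTopologicalGroup G]
    [MetricSpace M]
    (hinv : ∀ a b c : G, dist (a * c) (b * c) = dist a b)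
    (Φ : G → M → M)
    (hΦ1 : ∀ x, Φ 1 x = x) (hΦm : ∀ g h x, Φ (g * h) x = Φ g (Φ h x))
    (hΦc : Continuous fun p : G × M => Φ p.1 p.2)
    (hexp : ∀ ε > (0 : ℝ), ∃ δ > (0 : ℝ), ∀ x y : M, ∀ h : G → G,
      Continuous h → h 1 = 1 →
      (∀ g : G, dist (Φ g x) (Φ (h g) y) < δ) →
      ∃ g₀ : G, dist g₀ 1 < ε ∧ y = Φ g₀ x) :
    (∀ (p : M), (∀ g : G, Φ g p = p) →
      ∀ (δ : ℝ) (y : M), dist p y < δ →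
        ∀ g : G, dist (Φ g p) (Φ ((fun _ : G => (1 : G)) g) y) = dist p y ∧
          dist (Φ g p) (Φ ((fun _ : G => (1 : G)) g) y) < δ) ∧
    (∀ ε > (0 : ℝ), ∃ δ > (0 : ℝ), ∀ p : M, (∀ g : G, Φ g p = p) →
      Metric.ball p δ = {p}) ∧
    (ConnectedSpace M → (∃ a b : M, a ≠ b) → ¬ ∃ p : M, ∀ g : G, Φ g p = p) :=
  stmt_18_general Φ hΦ1 hexp
end
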